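/- Let Λ be a nonempty finite subset of Z^d, p ≥ 1 an integer, and let ν be a probability measure on Ω satisfying the moment concentration bound MCB(2p, C_{2p}) for some C_{2p} > 0. Let B_Λ ⊂ S^Λ with ν{ω : ω_Λ ∈ B_Λ} = 1/2, and for ε > 0 let B_{Λ,ε} = {σ ∈ S^Λ : d̄_Λ(σ, B_Λ) ≤ ε|Λ|}, where d̄_Λ(σ,τ) = Σ_{x∈Λ} 1{σ_x ≠ τ_x} and d̄_Λ(σ, B_Λ) = min over τ ∈ B_Λ of d̄_Λ(σ,τ). Then, whenever ε > (2C_{2p})^{1/(2p)}/√|Λ|: ν{ω : ω_Λ ∈ B_{Λ,ε}} ≥ 1 − C_{2p}·|Λ|^{−p}·(ε − (2C_{2p})^{1/(2p)}/√|Λ|)^{−2p}. -/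

import Mathlib

/-!
The distance `F ω = d̄_Λ(ω_Λ, B)` is `1`-Lipschitz for the Hamming distance on `S^Λ` and ignores
the spins outside `Λ`, so `‖δ(F)‖₂² ≤ |Λ|`. As `F` vanishes on an event of probability `1/2`, the
moment bound gives `(E F)^{2p} / 2 ≤ C |Λ|^p`, i.e. `E F ≤ (2C)^{1/(2p)} √|Λ|`, and Markov's
inequality for `(F - E F)^{2p}` bounds the probability that `F` exceeds `ε |Λ|`.
-/

open MeasureTheory Filter

namespace Paper

/-- Sites of the lattice `ℤ^d`. -/
abbrev Site (d : ℕ) := Fin d → ℤ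

/-- Configuration space `Ω = S^{ℤ^d}`. -/
abbrev Config (S : Type) (d : ℕ) := Site d → S

variable {S : Type} {d : ℕ}

/-- Shift action: `(T_x ω)_y = ω_{y-x}`. -/
def shift (x : Site d) (ω : Config S d) : Config S d := fun y => ω (y - x)

/-- Oscillation `δ_x(F)` of `F` at site `x`. -/
noncomputable def osc (F : Config S d → ℝ) (x : Site d) : ℝ :=
  sSup {r | ∃ ω ω' : Config S d, (∀ y, y ≠ x → ω y = ω' y) ∧ r = |F ω - F ω'|}

/-- `‖δ(F)‖₁`. -/
noncomputable def oscNorm1 (F : Config S d → ℝ) : ℝ := ∑' x : Site d, osc F x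

/-- `‖δ(F)‖₂²`. -/
noncomputable def oscNorm2sq (F : Config S d → ℝ) : ℝ := ∑' x : Site d, osc F x ^ 2

/-- `‖δ(F)‖₂`. -/
noncomputable def oscNorm2 (F : Config S d → ℝ) : ℝ := Real.sqrt (oscNorm2sq F)

/-- `F ∈ Δ₁(Ω)`: continuous with summable oscillations. -/
def MemDelta1 [TopologicalSpace S] (F : Config S d → ℝ) : Prop :=
  Continuous F ∧ Summable (fun x : Site d => osc F x)

/-- `F ∈ Δ₂(Ω)`: continuous with square-summable oscillations. -/
def MemDelta2 [TopologicalSpace S] (F : Config S d → ℝ) : Prop :=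
  Continuous F ∧ Summable (fun x : Site d => osc F x ^ 2)

/-- Gaussian concentration bound `GCB(D)`. -/
def GCB [TopologicalSpace S] [MeasurableSpace S] (ν : Measure (Config S d)) (D : ℝ) : Prop :=
  ∀ F : Config S d → ℝ, MemDelta2 F →
    ∫ ω, Real.exp (F ω - ∫ ω', F ω' ∂ν) ∂ν ≤ Real.exp (D * oscNorm2sq F)

/-- Moment concentration bound `MCB(2p, C)` of order `2p` with constant `C`. -/
def MCB [TopologicalSpace S] [MeasurableSpace S] (ν : Measure (Config S d)) (p : ℕ) (C : ℝ) :
    Prop :=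
  ∀ F : Config S d → ℝ, MemDelta2 F →
    ∫ ω, (F ω - ∫ ω', F ω' ∂ν) ^ (2 * p) ∂ν ≤ C * (oscNorm2sq F) ^ p

/-- A local function: depends only on finitely many coordinates. -/
def IsLocal (F : Config S d → ℝ) : Prop :=
  ∃ Λ : Finset (Site d), ∀ ω ω' : Config S d, (∀ x ∈ Λ, ω x = ω' x) → F ω = F ω'

/-- The cube `C_n = {x : ‖x‖_∞ ≤ n}`. -/
noncomputable def cube (d n : ℕ) : Finset (Site d) :=
  Fintype.piFinset (fun _ : Fin d => Finset.Icc (-(n : ℤ)) (n : ℤ))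

/-- Sup norm `‖f‖_∞`. -/
noncomputable def supNorm (f : Config S d → ℝ) : ℝ := sSup {r | ∃ ω, r = |f ω|}

/-- Restriction `ω_Λ` of a configuration to `Λ`. -/
def restrictTo (Λ : Finset (Site d)) (ω : Config S d) : {x // x ∈ Λ} → S := fun x => ω x.1

/-- Hamming distance from a pattern `σ` to a set `B` of patterns. -/
noncomputable def hamDistToSet [DecidableEq S] {Λ : Finset (Site d)}
    (σ : {x // x ∈ Λ} → S) (B : Set ({x // x ∈ Λ} → S)) : ℕ :=
  sInf {n : ℕ | ∃ τ ∈ B, hammingDist σ τ = n}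

section HamDistToSet

variable [DecidableEq S] {Λ : Finset (Site d)} {B : Set ({x // x ∈ Λ} → S)}

theorem hamDistToSet_le_hammingDist {σ τ : {x // x ∈ Λ} → S} (hτ : τ ∈ B) :
    hamDistToSet σ B ≤ hammingDist σ τ :=
  Nat.sInf_le ⟨τ, hτ, rfl⟩

theorem hamDistToSet_eq_zero_of_mem {σ : {x // x ∈ Λ} → S} (hσ : σ ∈ B) :
    hamDistToSet σ B = 0 := by
  simpa using hamDistToSet_le_hammingDist (σ := σ) hσ

theorem exists_hammingDist_eq_hamDistToSet (hB : B.Nonempty) (σ : {x // x ∈ Λ} → S) :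
    ∃ τ ∈ B, hammingDist σ τ = hamDistToSet σ B := by
  obtain ⟨τ, hτ⟩ := hB
  exact Nat.sInf_mem (s := {n | ∃ τ ∈ B, hammingDist σ τ = n}) ⟨_, τ, hτ, rfl⟩

theorem hamDistToSet_le_hammingDist_add (hB : B.Nonempty) (σ σ' : {x // x ∈ Λ} → S) :
    hamDistToSet σ B ≤ hammingDist σ σ' + hamDistToSet σ' B := by
  obtain ⟨τ, hτ, hdist⟩ := exists_hammingDist_eq_hamDistToSet hB σ'
  calc hamDistToSet σ B ≤ hammingDist σ τ := hamDistToSet_le_hammingDist hτ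
    _ ≤ hammingDist σ σ' + hammingDist σ' τ := hammingDist_triangle _ _ _
    _ = hammingDist σ σ' + hamDistToSet σ' B := by rw [hdist]

theorem abs_sub_hamDistToSet_le (hB : B.Nonempty) (σ σ' : {x // x ∈ Λ} → S) :
    |(hamDistToSet σ B : ℝ) - hamDistToSet σ' B| ≤ hammingDist σ σ' := by
  have h₁ := hamDistToSet_le_hammingDist_add hB σ σ'
  have h₂ := hamDistToSet_le_hammingDist_add hB σ' σ
  rw [hammingDist_comm] at h₂
  rw [abs_sub_le_iff, sub_le_iff_le_add, sub_le_iff_le_add]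
  exact ⟨by exact_mod_cast h₁, by exact_mod_cast h₂⟩

end HamDistToSet

section Oscillation

theorem osc_nonneg (F : Config S d → ℝ) (x : Site d) : 0 ≤ osc F x :=
  Real.sSup_nonneg fun _ ⟨_, _, _, hr⟩ => hr ▸ abs_nonneg _

theorem osc_le {F : Config S d → ℝ} {x : Site d} {c : ℝ} (hc : 0 ≤ c)
    (h : ∀ ω ω' : Config S d, (∀ y, y ≠ x → ω y = ω' y) → |F ω - F ω'| ≤ c) :
    osc F x ≤ c :=
  Real.sSup_le (by rintro _ ⟨ω, ω', hωω', rfl⟩; exact h ω ω' hωω') hc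

theorem oscNorm2sq_nonneg (F : Config S d → ℝ) : 0 ≤ oscNorm2sq F :=
  tsum_nonneg fun _ => sq_nonneg _

variable {Λ : Finset (Site d)} {x : Site d} {ω ω' : Config S d}

theorem restrictTo_eq_of_notMem (hx : x ∉ Λ) (h : ∀ y, y ≠ x → ω y = ω' y) :
    restrictTo Λ ω = restrictTo Λ ω' :=
  funext fun y => h y.1 fun hy => hx (hy ▸ y.2)

theorem osc_comp_restrictTo_of_notMem (f : ({x // x ∈ Λ} → S) → ℝ) (hx : x ∉ Λ) :
    osc (f ∘ restrictTo Λ) x = 0 :=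
  le_antisymm
    (osc_le le_rfl fun ω ω' h => by simp [Function.comp, restrictTo_eq_of_notMem hx h])
    (osc_nonneg _ _)

theorem memDelta2_comp_restrictTo [TopologicalSpace S] [DiscreteTopology S]
    (f : ({x // x ∈ Λ} → S) → ℝ) : MemDelta2 (f ∘ restrictTo Λ) :=
  ⟨continuous_of_discreteTopology.comp (continuous_pi fun x => continuous_apply x.1),
    summable_of_ne_finset_zero (s := Λ) fun x hx => by simp [osc_comp_restrictTo_of_notMem f hx]⟩

variable [DecidableEq S]

theorem hammingDist_restrictTo_le_one (h : ∀ y, y ≠ x → ω y = ω' y) :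
    hammingDist (restrictTo Λ ω) (restrictTo Λ ω') ≤ 1 := by
  refine Finset.card_le_one.mpr fun a ha b hb => Subtype.ext ?_
  simp only [Finset.mem_filter, Finset.mem_univ, true_and] at ha hb
  exact (not_not.mp (mt (h a.1) ha)).trans (not_not.mp (mt (h b.1) hb)).symm

variable {f : ({x // x ∈ Λ} → S) → ℝ}

theorem osc_comp_restrictTo_le_one (hf : ∀ σ τ, |f σ - f τ| ≤ hammingDist σ τ) (x : Site d) :
    osc (f ∘ restrictTo Λ) x ≤ 1 :=
  osc_le zero_le_one fun _ _ h =>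
    (hf _ _).trans (by exact_mod_cast hammingDist_restrictTo_le_one h)

theorem oscNorm2sq_comp_restrictTo_le (hf : ∀ σ τ, |f σ - f τ| ≤ hammingDist σ τ) :
    oscNorm2sq (f ∘ restrictTo Λ) ≤ Λ.card := by
  rw [oscNorm2sq, tsum_eq_sum (s := Λ) fun x hx => by simp [osc_comp_restrictTo_of_notMem f hx]]
  calc ∑ x ∈ Λ, osc (f ∘ restrictTo Λ) x ^ 2 ≤ ∑ _x ∈ Λ, (1 : ℝ) :=
        Finset.sum_le_sum fun x _ => pow_le_one₀ (osc_nonneg _ _) (osc_comp_restrictTo_le_one hf x)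
    _ = Λ.card := by simp

end Oscillation

section Measurability

variable [MeasurableSpace S] {Λ : Finset (Site d)}

theorem measurable_restrictTo : Measurable (restrictTo (S := S) Λ) :=
  measurable_pi_lambda _ fun x => measurable_pi_apply x.1

variable [Finite S] [MeasurableSingletonClass S]

theorem measurable_comp_restrictTo (f : ({x // x ∈ Λ} → S) → ℝ) :
    Measurable (f ∘ restrictTo Λ) :=
  (measurable_of_countable f).comp measurable_restrictTo

theorem integrable_comp_restrictTo (ν : Measure (Config S d)) [IsFiniteMeasure ν]
    (f : ({x // x ∈ Λ} → S) → ℝ) : Integrable (f ∘ restrictTo Λ) ν :=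
  Integrable.of_finite.comp_measurable measurable_restrictTo

end Measurability

section MomentBound

variable [TopologicalSpace S] [MeasurableSpace S] {ν : Measure (Config S d)} {p : ℕ} {C : ℝ}
  {F : Config S d → ℝ} {A : Set (Config S d)}

theorem MCB.integral_pow_mul_measureReal_le (h : MCB ν p C) (hF : MemDelta2 F)
    (hG : Integrable (fun ω => (F ω - ∫ ω', F ω' ∂ν) ^ (2 * p)) ν) (hA : MeasurableSet A)
    (hFA : ∀ ω ∈ A, F ω = 0) :
    (∫ ω, F ω ∂ν) ^ (2 * p) * ν.real A ≤ C * oscNorm2sq F ^ p :=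
  calc (∫ ω, F ω ∂ν) ^ (2 * p) * ν.real A
      = ∫ ω in A, (F ω - ∫ ω', F ω' ∂ν) ^ (2 * p) ∂ν := by
        rw [setIntegral_congr_fun hA fun ω hω => by
          rw [hFA ω hω, zero_sub, (even_two_mul p).neg_pow], setIntegral_const, smul_eq_mul,
          mul_comm]
    _ ≤ ∫ ω, (F ω - ∫ ω', F ω' ∂ν) ^ (2 * p) ∂ν :=
        setIntegral_le_integral hG (ae_of_all _ fun _ => (even_two_mul p).pow_nonneg _)
    _ ≤ C * oscNorm2sq F ^ p := h F hF

theorem MCB.measureReal_integral_add_le_le [IsFiniteMeasure ν] (h : MCB ν p C)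
    (hF : MemDelta2 F) (hG : Integrable (fun ω => (F ω - ∫ ω', F ω' ∂ν) ^ (2 * p)) ν)
    {t : ℝ} (ht : 0 < t) :
    ν.real {ω | ∫ ω', F ω' ∂ν + t ≤ F ω} ≤ C * oscNorm2sq F ^ p / t ^ (2 * p) := by
  rw [le_div_iff₀' (pow_pos ht _)]
  calc t ^ (2 * p) * ν.real {ω | ∫ ω', F ω' ∂ν + t ≤ F ω}
      ≤ t ^ (2 * p) * ν.real {ω | t ^ (2 * p) ≤ (F ω - ∫ ω', F ω' ∂ν) ^ (2 * p)} :=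
        mul_le_mul_of_nonneg_left (measureReal_mono
          (fun ω hω => pow_le_pow_left₀ ht.le (le_sub_iff_add_le'.mpr hω) _) (measure_ne_top ν _))
          (by positivity)
    _ ≤ ∫ ω, (F ω - ∫ ω', F ω' ∂ν) ^ (2 * p) ∂ν :=
        mul_meas_ge_le_integral_of_nonneg
          (ae_of_all _ fun _ => (even_two_mul p).pow_nonneg _) hG _
    _ ≤ C * oscNorm2sq F ^ p := h F hF

theorem MCB.integral_le_of_eq_zero_on (h : MCB ν p C) (hp : p ≠ 0) (hC : 0 ≤ C)
    (hF : MemDelta2 F) (hG : Integrable (fun ω => (F ω - ∫ ω', F ω' ∂ν) ^ (2 * p)) ν)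
    (hA : MeasurableSet A) (hνA : 1 / 2 ≤ ν.real A) (hFA : ∀ ω ∈ A, F ω = 0)
    {K : ℝ} (hK : oscNorm2sq F ≤ K) :
    ∫ ω, F ω ∂ν ≤ (2 * C) ^ ((1 : ℝ) / (2 * p)) * √K := by
  have hr : ((2 * C) ^ ((1 : ℝ) / (2 * p))) ^ (2 * p) = 2 * C := by
    rw [show (1 : ℝ) / (2 * p) = ((2 * p : ℕ) : ℝ)⁻¹ by push_cast; ring]
    exact Real.rpow_inv_natCast_pow (by linarith) (by omega)
  set m := ∫ ω, F ω ∂ν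
  set r := (2 * C) ^ ((1 : ℝ) / (2 * p))
  have hK0 : 0 ≤ K := (oscNorm2sq_nonneg F).trans hK
  have hpow : |m| ^ (2 * p) ≤ (r * √K) ^ (2 * p) :=
    calc |m| ^ (2 * p) = m ^ (2 * p) := (even_two_mul p).pow_abs m
      _ ≤ 2 * (m ^ (2 * p) * ν.real A) := by
        nlinarith [(even_two_mul p).pow_nonneg m]
      _ ≤ 2 * (C * oscNorm2sq F ^ p) := by
        gcongr 2 * ?_; exact h.integral_pow_mul_measureReal_le hF hG hA hFA
      _ ≤ 2 * (C * K ^ p) := by gcongr; exact oscNorm2sq_nonneg F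
      _ = (r * √K) ^ (2 * p) := by rw [mul_pow, hr, pow_mul, Real.sq_sqrt hK0]; ring
  have hrK : 0 ≤ r * √K := mul_nonneg (Real.rpow_nonneg (by linarith) _) (Real.sqrt_nonneg K)
  exact (le_abs_self m).trans ((pow_le_pow_iff_left₀ (abs_nonneg m) hrK (by omega)).mp hpow)

theorem MCB.measureReal_lt_le_of_eq_zero_on [IsFiniteMeasure ν] (h : MCB ν p C) (hp : p ≠ 0)
    (hC : 0 ≤ C) (hF : MemDelta2 F)
    (hG : Integrable (fun ω => (F ω - ∫ ω', F ω' ∂ν) ^ (2 * p)) ν)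
    (hA : MeasurableSet A) (hνA : 1 / 2 ≤ ν.real A) (hFA : ∀ ω ∈ A, F ω = 0)
    {K u : ℝ} (hK : oscNorm2sq F ≤ K) (hu : (2 * C) ^ ((1 : ℝ) / (2 * p)) * √K < u) :
    ν.real {ω | u < F ω} ≤
      C * K ^ p / (u - (2 * C) ^ ((1 : ℝ) / (2 * p)) * √K) ^ (2 * p) := by
  have hm := h.integral_le_of_eq_zero_on hp hC hF hG hA hνA hFA hK
  calc ν.real {ω | u < F ω}
      ≤ ν.real {ω | ∫ ω', F ω' ∂ν + (u - (2 * C) ^ ((1 : ℝ) / (2 * p)) * √K) ≤ F ω} :=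
        measureReal_mono (fun ω (hω : u < F ω) => by change _ + _ ≤ F ω; linarith)
          (measure_ne_top ν _)
    _ ≤ C * oscNorm2sq F ^ p / (u - (2 * C) ^ ((1 : ℝ) / (2 * p)) * √K) ^ (2 * p) :=
        h.measureReal_integral_add_le_le hF hG (by linarith)
    _ ≤ C * K ^ p / (u - (2 * C) ^ ((1 : ℝ) / (2 * p)) * √K) ^ (2 * p) := by
        gcongr; exact oscNorm2sq_nonneg F

end MomentBound

theorem mul_pow_div_sub_mul_sqrt_pow_eq {C n r ε : ℝ} (hn : 0 < n) (p : ℕ) :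
    C * n ^ p / (ε * n - r * √n) ^ (2 * p) =
      C * n ^ (-(p : ℝ)) * (ε - r / √n) ^ (-(2 * (p : ℝ))) := by
  have hfactor : ε * n - r * √n = n * (ε - r / √n) := by
    rw [mul_sub, ← mul_div_assoc, mul_comm n r, mul_div_assoc, Real.div_sqrt]
    ring
  rw [show -(p : ℝ) = ((-p : ℤ) : ℝ) by push_cast; ring,
    show -(2 * (p : ℝ)) = ((-(2 * p : ℕ) : ℤ) : ℝ) by push_cast; ring,
    Real.rpow_intCast, Real.rpow_intCast, zpow_neg, zpow_neg, zpow_natCast, zpow_natCast,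
    hfactor, mul_pow, pow_mul]
  field_simp
  ring

/-- fattening patterns under a moment concentration bound. -/
theorem fattening_mcb {S : Type} {d : ℕ} [Fintype S] [DecidableEq S] [TopologicalSpace S]
    [DiscreteTopology S] [MeasurableSpace S] [BorelSpace S]
    (Λ : Finset (Site d)) (hΛ : Λ.Nonempty) (p : ℕ) (hp : 1 ≤ p)
    (ν : Measure (Config S d)) [IsProbabilityMeasure ν]
    (C : ℝ) (hC : 0 < C) (hMCB : MCB ν p C)
    (B : Set ({x // x ∈ Λ} → S))
    (hB : ν {ω | restrictTo Λ ω ∈ B} = 1 / 2)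
    (ε : ℝ) (hε : (2 * C) ^ ((1 : ℝ) / (2 * p)) / Real.sqrt (Λ.card : ℝ) < ε) :
    1 - ENNReal.ofReal (C * (Λ.card : ℝ) ^ (-(p : ℝ)) *
        (ε - (2 * C) ^ ((1 : ℝ) / (2 * p)) / Real.sqrt (Λ.card : ℝ)) ^ (-(2 * (p : ℝ)))) ≤
      ν {ω | (hamDistToSet (restrictTo Λ ω) B : ℝ) ≤ ε * (Λ.card : ℝ)} := by
  set n : ℝ := (Λ.card : ℝ)
  have hn : 0 < n := Nat.cast_pos.mpr hΛ.card_pos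
  have hBne : B.Nonempty := by
    have hpos : ν {ω | restrictTo Λ ω ∈ B} ≠ 0 := by rw [hB]; norm_num
    obtain ⟨_, hω⟩ := nonempty_of_measure_ne_zero hpos
    exact ⟨_, hω⟩
  set f : ({x // x ∈ Λ} → S) → ℝ := fun σ => hamDistToSet σ B
  have hu : (2 * C) ^ ((1 : ℝ) / (2 * p)) * √n < ε * n := by
    have hsqrt := Real.sqrt_pos.mpr hn
    calc (2 * C) ^ ((1 : ℝ) / (2 * p)) * √n < ε * √n * √n :=
          mul_lt_mul_of_pos_right ((div_lt_iff₀ hsqrt).mp hε) hsqrt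
      _ = ε * n := by rw [mul_assoc, Real.mul_self_sqrt hn.le]
  have hbad := hMCB.measureReal_lt_le_of_eq_zero_on (F := f ∘ restrictTo Λ)
    (A := {ω | restrictTo Λ ω ∈ B}) (by omega) hC.le (memDelta2_comp_restrictTo f)
    (integrable_comp_restrictTo ν fun σ => (f σ - ∫ ω, (f ∘ restrictTo Λ) ω ∂ν) ^ (2 * p))
    (measurable_restrictTo B.toFinite.measurableSet) (by rw [measureReal_def, hB]; norm_num)
    (fun ω (hω : restrictTo Λ ω ∈ B) => by simp [f, hamDistToSet_eq_zero_of_mem hω])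
    (oscNorm2sq_comp_restrictTo_le (abs_sub_hamDistToSet_le hBne)) hu
  rw [mul_pow_div_sub_mul_sqrt_pow_eq hn] at hbad
  have hmeas : MeasurableSet {ω | ε * n < (f ∘ restrictTo Λ) ω} :=
    measurableSet_lt measurable_const (measurable_comp_restrictTo f)
  calc 1 - ENNReal.ofReal _ ≤ 1 - ν {ω | ε * n < (f ∘ restrictTo Λ) ω} :=
        tsub_le_tsub_left (by rw [← ofReal_measureReal]; exact ENNReal.ofReal_le_ofReal hbad) 1
    _ = ν {ω | ε * n < (f ∘ restrictTo Λ) ω}ᶜ := (prob_compl_eq_one_sub hmeas).symm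
    _ = _ := by congr 1; ext; simp [f, not_lt]

end Paper
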